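/- Let X be a separable Banach space and Y a WCG Banach space (there is a weakly compact set G ⊆ Y with Y = closed linear span of G). Then the projective tensor product X ⊗̂_π Y is WCG. More precisely, if (xₙ) is dense in X and K ⊆ Y is weakly compact with Y = closed span of K, then each set {xₙ} ⊗ K is weakly compact in X ⊗̂_π Y and the union of these sets has dense linear span. -/

import Mathlib

/-!
For fixed `x`, the operator `y ↦ x ⊗ y` is bounded, hence weak-to-weak continuous, so each
`{xₙ} ⊗ K` is weakly compact. Separate continuity of `⊗` in each variable puts every `x ⊗ y` into
the closed span of these sets, and elementary tensors span `X ⊗ Y`, which is dense in its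
completion. Finally, weakly compact sets are bounded, so the countably many sets `{xₙ} ⊗ K` can be
rescaled to `cₙ ({xₙ} ⊗ K) ⊆ closedBall 0 (1 / (n + 1))`; together with `0` their union is weakly
compact, because every weak neighbourhood of `0` is a norm neighbourhood and thus contains all
but finitely many of them.
-/

open TensorProduct UniformSpace NormedSpace
open scoped ENNReal

section ProjectiveTensor

variable (X Y : Type*) [NormedAddCommGroup X] [NormedSpace ℝ X]
  [NormedAddCommGroup Y] [NormedSpace ℝ Y]

/-- A continuous bilinear form, viewed as a plain bilinear map. -/
noncomputable def bilinL :
    (X →L[ℝ] Y →L[ℝ] ℝ) →ₗ[ℝ] (X →ₗ[ℝ] Y →ₗ[ℝ] ℝ) :=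
  (LinearMap.llcomp ℝ X (Y →L[ℝ] ℝ) (Y →ₗ[ℝ] ℝ) (ContinuousLinearMap.coeLM ℝ)) ∘ₗ
    ContinuousLinearMap.coeLM ℝ

/-- The linear functional on `X ⊗ Y` induced by a continuous bilinear form. -/
noncomputable def tensorEval :
    (X →L[ℝ] Y →L[ℝ] ℝ) →ₗ[ℝ] (X ⊗[ℝ] Y →ₗ[ℝ] ℝ) :=
  (TensorProduct.lift.equiv (RingHom.id ℝ) X Y ℝ).toLinearMap ∘ₗ bilinL X Y

lemma tensorEval_exists_bound (u : X ⊗[ℝ] Y) :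
    ∃ C : ℝ, 0 ≤ C ∧ ∀ S : X →L[ℝ] Y →L[ℝ] ℝ, |tensorEval X Y S u| ≤ C * ‖S‖ := by
  induction u using TensorProduct.induction_on with
  | zero => exact ⟨0, le_refl _, fun S => by simp⟩
  | tmul x y =>
      refine ⟨‖x‖ * ‖y‖, mul_nonneg (norm_nonneg x) (norm_nonneg y), fun S => ?_⟩
      have h : tensorEval X Y S (x ⊗ₜ[ℝ] y) = S x y := rfl
      rw [h]
      calc |S x y| = ‖S x y‖ := rfl
        _ ≤ ‖S x‖ * ‖y‖ := (S x).le_opNorm y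
        _ ≤ (‖S‖ * ‖x‖) * ‖y‖ := by
            have := S.le_opNorm x
            gcongr
        _ = ‖x‖ * ‖y‖ * ‖S‖ := by ring
  | add u v hu hv =>
      obtain ⟨C1, hC1, h1⟩ := hu
      obtain ⟨C2, hC2, h2⟩ := hv
      refine ⟨C1 + C2, add_nonneg hC1 hC2, fun S => ?_⟩
      have h : tensorEval X Y S (u + v) = tensorEval X Y S u + tensorEval X Y S v :=
        map_add _ _ _
      rw [h, add_mul]
      exact (abs_add_le _ _).trans (add_le_add (h1 S) (h2 S))

/-- The canonical embedding of `X ⊗ Y` into the space of bounded families indexed by the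
unit ball of the space of continuous bilinear forms on `X × Y`; the norm it induces on
`X ⊗ Y` is exactly the projective tensor norm
`‖u‖_π = sup {|S(u)| : S a continuous bilinear form, ‖S‖ ≤ 1}`. -/
noncomputable def toBilinBall :
    (X ⊗[ℝ] Y) →ₗ[ℝ]
      lp (fun _ : {S : X →L[ℝ] Y →L[ℝ] ℝ // ‖S‖ ≤ 1} => ℝ) ∞ where
  toFun u := ⟨fun S => tensorEval X Y S.1 u, by
    apply memℓp_infty
    obtain ⟨C, hC0, hC⟩ := tensorEval_exists_bound X Y u
    refine ⟨C, ?_⟩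
    rintro r ⟨S, rfl⟩
    calc ‖tensorEval X Y S.1 u‖ = |tensorEval X Y S.1 u| := rfl
      _ ≤ C * ‖S.1‖ := hC S.1
      _ ≤ C := mul_le_of_le_one_right hC0 S.2⟩
  map_add' u v := Subtype.ext (funext fun S => map_add (tensorEval X Y S.1) u v)
  map_smul' c u := Subtype.ext (funext fun S => map_smul (tensorEval X Y S.1) c u)

/-- `X ⊗ Y` equipped with the projective tensor seminorm. -/
noncomputable instance : SeminormedAddCommGroup (X ⊗[ℝ] Y) :=
  SeminormedAddCommGroup.induced _ _ (toBilinBall X Y)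

noncomputable instance : NormedSpace ℝ (X ⊗[ℝ] Y) :=
  NormedSpace.induced ℝ _ _ (toBilinBall X Y)

end ProjectiveTensor

open Filter Topology Bornology

theorem isCompact_insert_iUnion_of_tendsto_smallSets {α ι : Type*} [TopologicalSpace α]
    {a : α} {K : ι → Set α} (hK : ∀ i, IsCompact (K i))
    (hlim : Tendsto K cofinite (𝓝 a).smallSets) : IsCompact (insert a (⋃ i, K i)) := by
  classical
  rw [isCompact_iff_finite_subcover]
  intro β U hUo hcover
  obtain ⟨j, hj⟩ := Set.mem_iUnion.1 (hcover (Set.mem_insert a _))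
  have hfin : {i | ¬K i ⊆ U j}.Finite :=
    eventually_cofinite.1 (tendsto_smallSets_iff.1 hlim _ ((hUo j).mem_nhds hj))
  obtain ⟨t, ht⟩ := (hfin.isCompact_biUnion fun i _ => hK i).elim_finite_subcover U hUo
    ((Set.iUnion₂_subset fun i _ => Set.subset_iUnion K i).trans
      ((Set.subset_insert a _).trans hcover))
  refine ⟨insert j t, ?_⟩
  rintro z (rfl | ⟨-, ⟨i, rfl⟩, hz⟩)
  · exact Set.mem_biUnion (Finset.mem_insert_self j t) hj
  by_cases hi : K i ⊆ U j
  · exact Set.mem_biUnion (Finset.mem_insert_self j t) (hi hz)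
  · obtain ⟨k, hk, hzk⟩ := Set.mem_iUnion₂.1 (ht (Set.mem_biUnion hi hz))
    exact Set.mem_biUnion (Finset.mem_insert_of_mem hk) hzk

section WeakSpace

variable {𝕜 E F : Type*} [CommSemiring 𝕜] [TopologicalSpace 𝕜] [ContinuousAdd 𝕜]
  [ContinuousConstSMul 𝕜 𝕜] [AddCommMonoid E] [Module 𝕜 E] [TopologicalSpace E]
  [AddCommMonoid F] [Module 𝕜 F] [TopologicalSpace F]

theorem IsCompact.image_toWeakSpace_map {K : Set E} (hK : IsCompact (toWeakSpace 𝕜 E '' K))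
    (T : E →L[𝕜] F) : IsCompact (toWeakSpace 𝕜 F '' (T '' K)) := by
  have h := hK.image (WeakSpace.map T).continuous
  rw [Set.image_image] at h ⊢
  exact h

theorem isCompact_toWeakSpace_insert_zero_iUnion {ι : Type*} {K : ι → Set E}
    (hK : ∀ i, IsCompact (toWeakSpace 𝕜 E '' K i)) (hlim : Tendsto K cofinite (𝓝 0).smallSets) :
    IsCompact (toWeakSpace 𝕜 E '' insert 0 (⋃ i, K i)) := by
  have hweak : Tendsto (toWeakSpace 𝕜 E) (𝓝 0) (𝓝 0) :=
    (toWeakSpaceCLM 𝕜 E).continuous.tendsto' 0 0 (map_zero _)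
  rw [Set.image_insert_eq, Set.image_iUnion, map_zero]
  exact isCompact_insert_iUnion_of_tendsto_smallSets hK (hweak.image_smallSets.comp hlim)

end WeakSpace

section Normed

open Pointwise

variable {E : Type*} [NormedAddCommGroup E] [NormedSpace ℝ E]

theorem isBounded_of_isCompact_toWeakSpace_image {K : Set E}
    (hK : IsCompact (toWeakSpace ℝ E '' K)) : IsBounded K := by
  have hpointwise : ∀ φ : StrongDual ℝ E, ∃ C, ∀ k : K, ‖inclusionInDoubleDual ℝ E k φ‖ ≤ C := by
    intro φ
    obtain ⟨C, hC⟩ := (hK.image (WeakBilin.eval_continuous _ φ)).isBounded.exists_norm_le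
    exact ⟨C, fun k => hC _ ⟨_, Set.mem_image_of_mem _ k.2, rfl⟩⟩
  obtain ⟨C, hC⟩ := banach_steinhaus hpointwise
  refine isBounded_iff_forall_norm_le.2 ⟨C, fun k hk => ?_⟩
  rw [← (inclusionInDoubleDualLi ℝ (E := E)).norm_map k]
  exact hC ⟨k, hk⟩

theorem exists_isCompact_toWeakSpace_span_eq_span_iUnion {K : ℕ → Set E}
    (hK : ∀ n, IsCompact (toWeakSpace ℝ E '' K n)) :
    ∃ G : Set E, IsCompact (toWeakSpace ℝ E '' G) ∧
      Submodule.span ℝ G = Submodule.span ℝ (⋃ n, K n) := by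
  choose R hRpos hR using fun n =>
    (isBounded_of_isCompact_toWeakSpace_image (hK n)).exists_pos_norm_le
  set c : ℕ → ℝ := fun n => ((n + 1) * R n)⁻¹
  have hc : ∀ n, 0 < c n := fun n => by have := hRpos n; positivity
  have hsmall : ∀ n, c n • K n ⊆ Metric.closedBall 0 (1 / (n + 1)) := by
    rintro n - ⟨v, hv, rfl⟩
    rw [mem_closedBall_zero_iff, norm_smul, Real.norm_of_nonneg (hc n).le]
    calc c n * ‖v‖ ≤ c n * R n := mul_le_mul_of_nonneg_left (hR n v hv) (hc n).le
      _ = 1 / (n + 1) := by simp only [c]; field_simp [(hRpos n).ne']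
  have hlim : Tendsto (fun n => c n • K n) cofinite (𝓝 0).smallSets := by
    rw [Nat.cofinite_eq_atTop]
    exact ((tendsto_closedBall_smallSets 0).comp
      tendsto_one_div_add_atTop_nhds_zero_nat).smallSets_mono
      (Eventually.of_forall hsmall)
  refine ⟨insert 0 (⋃ n, c n • K n), isCompact_toWeakSpace_insert_zero_iUnion
    (fun n => by simpa only [image_smul_set] using (hK n).smul (c n)) hlim, ?_⟩
  simp only [Submodule.span_insert_zero, Submodule.span_iUnion,
    Submodule.span_smul_eq_of_isUnit _ _ (hc _).ne'.isUnit]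

end Normed

theorem ContinuousLinearMap.apply_mem_topologicalClosure_span_image {R E F : Type*}
    [Semiring R] [TopologicalSpace R] [AddCommMonoid E] [Module R E] [TopologicalSpace E]
    [ContinuousAdd E] [ContinuousSMul R E] [AddCommMonoid F] [Module R F] [TopologicalSpace F]
    [ContinuousAdd F] [ContinuousSMul R F] (f : E →L[R] F) {s : Set E}
    (hs : (Submodule.span R s).topologicalClosure = ⊤) (e : E) :
    f e ∈ (Submodule.span R (f '' s)).topologicalClosure := by
  have hmap := (Submodule.span R s).topologicalClosure_map f
  rw [hs, Submodule.map_span] at hmap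
  exact hmap ⟨e, Submodule.mem_top, rfl⟩

section ProjectiveTensorLemmas

variable {X Y : Type*} [NormedAddCommGroup X] [NormedSpace ℝ X]
  [NormedAddCommGroup Y] [NormedSpace ℝ Y]

theorem norm_tmul_le (x : X) (y : Y) : ‖x ⊗ₜ[ℝ] y‖ ≤ ‖x‖ * ‖y‖ := by
  refine lp.norm_le_of_forall_le (by positivity) fun S => ?_
  calc ‖S.1 x y‖ ≤ ‖S.1‖ * ‖x‖ * ‖y‖ := S.1.le_opNorm₂ x y
    _ ≤ 1 * ‖x‖ * ‖y‖ := by gcongr; exact S.2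
    _ = ‖x‖ * ‖y‖ := by rw [one_mul]

noncomputable def tmulL : X →L[ℝ] Y →L[ℝ] X ⊗[ℝ] Y :=
  (TensorProduct.mk ℝ X Y).mkContinuous₂ 1 fun x y => by
    rw [one_mul]
    exact norm_tmul_le x y

theorem topologicalClosure_span_image2_tmul_eq_top {A : Set X} {B : Set Y}
    (hA : (Submodule.span ℝ A).topologicalClosure = ⊤)
    (hB : (Submodule.span ℝ B).topologicalClosure = ⊤) :
    (Submodule.span ℝ (Set.image2 (· ⊗ₜ[ℝ] ·) A B)).topologicalClosure = ⊤ := by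
  set M := (Submodule.span ℝ (Set.image2 (· ⊗ₜ[ℝ] ·) A B)).topologicalClosure
  have hleft : ∀ x, ∀ y ∈ B, x ⊗ₜ[ℝ] y ∈ M := by
    intro x y hy
    refine Submodule.topologicalClosure_mono (Submodule.span_mono ?_)
      ((tmulL.flip y).apply_mem_topologicalClosure_span_image hA x)
    rintro _ ⟨a, ha, rfl⟩
    exact Set.mem_image2_of_mem ha hy
  have htmul : ∀ x y, x ⊗ₜ[ℝ] y ∈ M := fun x y =>
    Submodule.topologicalClosure_minimal _
      (Submodule.span_le.2 (Set.image_subset_iff.2 fun b hb => hleft x b hb))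
      (Submodule.isClosed_topologicalClosure _)
      ((tmulL x).apply_mem_topologicalClosure_span_image hB y)
  rw [eq_top_iff, ← TensorProduct.span_tmul_eq_top, Submodule.span_le]
  rintro _ ⟨x, y, rfl⟩
  exact htmul x y

end ProjectiveTensorLemmas

theorem projectiveTensorProduct_WCG_of_separable_of_WCG_general
    {X Y : Type*} [NormedAddCommGroup X] [NormedSpace ℝ X]
    [NormedAddCommGroup Y] [NormedSpace ℝ Y]
    (x : ℕ → X) (hx : DenseRange x)
    (K : Set Y) (hK : IsCompact (toWeakSpace ℝ Y '' K))
    (hKgen : (Submodule.span ℝ K).topologicalClosure = ⊤) :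
    (∀ n : ℕ, IsCompact (toWeakSpace ℝ (Completion (X ⊗[ℝ] Y)) ''
        ((fun y : Y => ((x n ⊗ₜ[ℝ] y : X ⊗[ℝ] Y) : Completion (X ⊗[ℝ] Y))) '' K))) ∧
    (Submodule.span ℝ
        (⋃ n : ℕ, (fun y : Y => ((x n ⊗ₜ[ℝ] y : X ⊗[ℝ] Y) : Completion (X ⊗[ℝ] Y))) '' K)
      ).topologicalClosure = ⊤ ∧
    ∃ G : Set (Completion (X ⊗[ℝ] Y)),
      IsCompact (toWeakSpace ℝ (Completion (X ⊗[ℝ] Y)) '' G) ∧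
      (Submodule.span ℝ G).topologicalClosure = ⊤ := by
  let T : ℕ → Y →L[ℝ] Completion (X ⊗[ℝ] Y) := fun n =>
    (Completion.toComplL (𝕜 := ℝ)).comp (tmulL (x n))
  have hslices : ∀ n, IsCompact (toWeakSpace ℝ _ '' (T n '' K)) :=
    fun n => hK.image_toWeakSpace_map (T n)
  have hxspan : (Submodule.span ℝ (Set.range x)).topologicalClosure = ⊤ :=
    Submodule.dense_iff_topologicalClosure_eq_top.1 (hx.mono Submodule.subset_span)
  have hunion : ⋃ n, T n '' K =
      Completion.toComplL (𝕜 := ℝ) '' Set.image2 (· ⊗ₜ[ℝ] ·) (Set.range x) K := by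
    rw [← Set.iUnion_image_left, Set.biUnion_range, Set.image_iUnion]
    simp only [Set.image_image]
    rfl
  have hspan : (Submodule.span ℝ (⋃ n, T n '' K)).topologicalClosure = ⊤ := by
    have hdense := (Completion.denseRange_coe (α := X ⊗[ℝ] Y)).topologicalClosure_map_submodule
      (f := Completion.toComplL (𝕜 := ℝ)) (topologicalClosure_span_image2_tmul_eq_top hxspan hKgen)
    rw [Submodule.map_span] at hdense
    rw [hunion]
    exact hdense
  obtain ⟨G, hG, hGspan⟩ := exists_isCompact_toWeakSpace_span_eq_span_iUnion hslices
  exact ⟨hslices, hspan, G, hG, hGspan ▸ hspan⟩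

/-- Let `X` be a separable Banach space and `Y` a WCG Banach space.
Then the projective tensor product `X ⊗̂_π Y` (realized as the completion of `X ⊗ Y`
under the projective norm) is WCG. More precisely, if `(xₙ)` is dense in `X` and `K ⊆ Y`
is weakly compact with `Y = closed span K`, then each set `{xₙ} ⊗ K` is weakly compact in
`X ⊗̂_π Y` and the union of these sets has dense linear span. -/
theorem projectiveTensorProduct_WCG_of_separable_of_WCG
    {X Y : Type*} [NormedAddCommGroup X] [NormedSpace ℝ X] [CompleteSpace X]
    [NormedAddCommGroup Y] [NormedSpace ℝ Y] [CompleteSpace Y]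
    [TopologicalSpace.SeparableSpace X]
    (x : ℕ → X) (hx : DenseRange x)
    (K : Set Y) (hK : IsCompact (toWeakSpace ℝ Y '' K))
    (hKgen : (Submodule.span ℝ K).topologicalClosure = ⊤) :
    (∀ n : ℕ, IsCompact (toWeakSpace ℝ (Completion (X ⊗[ℝ] Y)) ''
        ((fun y : Y => ((x n ⊗ₜ[ℝ] y : X ⊗[ℝ] Y) : Completion (X ⊗[ℝ] Y))) '' K))) ∧
    (Submodule.span ℝ
        (⋃ n : ℕ, (fun y : Y => ((x n ⊗ₜ[ℝ] y : X ⊗[ℝ] Y) : Completion (X ⊗[ℝ] Y))) '' K)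
      ).topologicalClosure = ⊤ ∧
    ∃ G : Set (Completion (X ⊗[ℝ] Y)),
      IsCompact (toWeakSpace ℝ (Completion (X ⊗[ℝ] Y)) '' G) ∧
      (Submodule.span ℝ G).topologicalClosure = ⊤ :=
  projectiveTensorProduct_WCG_of_separable_of_WCG_general x hx K hK hKgen
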